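/- arXiv:math/0309127 — 4 statements merged into one kernel-verified Lean document; each statement's English description precedes it below -/
import Mathlib

section
/- The family of open sets {U_A : A trace class} covers the space of Fredholm operators of index zero, i.e., for every index-zero Fredholm operator T there is a trace class operator A with T + A invertible. -/
open Module

variable {H : Type*} [NormedAddCommGroup H] [InnerProductSpace ℂ H] [CompleteSpace H]

/-- A bounded operator is Fredholm if its kernel is finite dimensional and its range is
closed with finite dimensional cokernel. -/
def IsFredholm (T : H →L[ℂ] H) : Prop :=
  FiniteDimensional ℂ (LinearMap.ker (T : H →ₗ[ℂ] H)) ∧ IsClosed (LinearMap.range (T : H →ₗ[ℂ] H) : Set H) ∧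
    FiniteDimensional ℂ (H ⧸ LinearMap.range (T : H →ₗ[ℂ] H))

/-- A Fredholm operator has index zero if `dim Ker T = dim Coker T`. -/
def HasIndexZero (T : H →L[ℂ] H) : Prop :=
  Module.finrank ℂ (LinearMap.ker (T : H →ₗ[ℂ] H)) = Module.finrank ℂ (H ⧸ LinearMap.range (T : H →ₗ[ℂ] H))

/-- Trace class operators, characterized through singular value decompositions:
`T` is trace class iff `T = ∑ cₙ ⟨eₙ, ·⟩ fₙ` with `‖eₙ‖, ‖fₙ‖ ≤ 1` and `∑ ‖cₙ‖ < ∞`. -/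
def IsTraceClass (T : H →L[ℂ] H) : Prop :=
  ∃ (c : ℕ → ℂ) (e f : ℕ → H), Summable (fun n => ‖c n‖) ∧
    (∀ n, ‖e n‖ ≤ 1) ∧ (∀ n, ‖f n‖ ≤ 1) ∧
    ∀ x, T x = ∑' n, c n • (inner ℂ (e n) x : ℂ) • f n

/-! Let `K = ker T` and `R = range T`; the range is closed, so `H = R ⊕ Rᗮ` and `Rᗮ` is a
copy of the cokernel. Index zero makes `K` and `Rᗮ` isomorphic, so composing the orthogonal
projection onto `K` with such an isomorphism gives a finite rank `A` with `ker A = Kᗮ` and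
`range A = Rᗮ`. The kernels of `T` and `A` are then complementary, and so are their ranges, which
makes `T + A` bijective, hence invertible by the open mapping theorem. Finite rank operators are
trace class: write `A x = ∑ ⟪bᵢ, A x⟫ bᵢ = ∑ ⟪A† bᵢ, x⟫ bᵢ` for an orthonormal basis `bᵢ` of the
range and rescale. -/

theorem LinearMap.bijective_add_of_isCompl {R V W : Type*} [Ring R] [AddCommGroup V]
    [Module R V] [AddCommGroup W] [Module R W] (T A : V →ₗ[R] W)
    (hker : IsCompl (ker T) (ker A)) (hrange : IsCompl (range T) (range A)) :
    Function.Bijective (T + A) := by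
  refine ⟨(injective_iff_map_eq_zero _).2 fun x hx => ?_, fun y => ?_⟩
  · have hTx : T x ∈ range T ⊓ range A :=
      ⟨mem_range_self T x, eq_neg_of_add_eq_zero_left hx ▸ neg_mem (mem_range_self A x)⟩
    rw [hrange.inf_eq_bot, Submodule.mem_bot] at hTx
    have hAx : A x = 0 := by simpa [hTx] using hx
    have hx' : x ∈ ker T ⊓ ker A := ⟨hTx, hAx⟩
    rwa [hker.inf_eq_bot, Submodule.mem_bot] at hx'
  · obtain ⟨_, ⟨a, rfl⟩, _, ⟨b, rfl⟩, rfl⟩ :=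
      Submodule.mem_sup.1 (hrange.sup_eq_top ▸ Submodule.mem_top : y ∈ _)
    obtain ⟨a₁, ha₁, a₂, ha₂, rfl⟩ :=
      Submodule.mem_sup.1 (hker.sup_eq_top ▸ Submodule.mem_top : a ∈ _)
    obtain ⟨b₁, hb₁, b₂, hb₂, rfl⟩ :=
      Submodule.mem_sup.1 (hker.sup_eq_top ▸ Submodule.mem_top : b ∈ _)
    refine ⟨a₂ + b₁, ?_⟩
    simp only [add_apply, map_add, mem_ker.1 ha₁, mem_ker.1 ha₂, mem_ker.1 hb₁, mem_ker.1 hb₂]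
    abel

theorem exists_norm_le_one_and_eq_smul {𝕜 E : Type*} [RCLike 𝕜] [NormedAddCommGroup E]
    [NormedSpace 𝕜 E] (v : E) : ∃ (a : 𝕜) (u : E), ‖u‖ ≤ 1 ∧ v = a • u := by
  have hpos : 0 < ‖v‖ + 1 := by positivity
  refine ⟨((‖v‖ + 1 : ℝ) : 𝕜), ((‖v‖ + 1 : ℝ) : 𝕜)⁻¹ • v, ?_, ?_⟩
  · rw [norm_smul, norm_inv, RCLike.norm_ofReal, abs_of_pos hpos, inv_mul_le_iff₀ hpos]
    linarith
  · rw [smul_inv_smul₀ (RCLike.ofReal_ne_zero.2 hpos.ne')]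

theorem isTraceClass_of_apply_eq_sum_of_norm_le_one {ι E : Type*} [Fintype ι]
    [NormedAddCommGroup E] [InnerProductSpace ℂ E] (A : E →L[ℂ] E) (c : ι → ℂ) (e f : ι → E)
    (he : ∀ i, ‖e i‖ ≤ 1) (hf : ∀ i, ‖f i‖ ≤ 1)
    (hA : ∀ x, A x = ∑ i, c i • (inner ℂ (e i) x : ℂ) • f i) : IsTraceClass A := by
  classical
  obtain ⟨g, hg⟩ := exists_injective_nat ι
  set s := Finset.univ.image g
  have hc : ∀ m ∉ s, Function.extend g c 0 m = 0 := fun m hm =>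
    Function.extend_apply' _ _ _ (by simpa [s] using hm)
  have hbound (v : ι → E) (hv : ∀ i, ‖v i‖ ≤ 1) (m : ℕ) : ‖Function.extend g v 0 m‖ ≤ 1 := by
    by_cases hm : ∃ i, g i = m
    · obtain ⟨i, rfl⟩ := hm
      simpa [hg.extend_apply] using hv i
    · simp [Function.extend_apply' _ _ _ hm]
  refine ⟨Function.extend g c 0, Function.extend g e 0, Function.extend g f 0,
    summable_of_ne_finset_zero (s := s) fun m hm => by simp [hc m hm], hbound e he, hbound f hf,
    fun x => ?_⟩
  rw [tsum_eq_sum (s := s) fun m hm => by simp [hc m hm], Finset.sum_image hg.injOn, hA]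
  simp only [hg.extend_apply]

theorem isTraceClass_of_apply_eq_sum_inner_smul {ι E : Type*} [Fintype ι] [NormedAddCommGroup E]
    [InnerProductSpace ℂ E] (A : E →L[ℂ] E) (e f : ι → E)
    (hA : ∀ x, A x = ∑ i, (inner ℂ (e i) x : ℂ) • f i) : IsTraceClass A := by
  choose a u hu he using fun i => exists_norm_le_one_and_eq_smul (𝕜 := ℂ) (e i)
  choose b w hw hf using fun i => exists_norm_le_one_and_eq_smul (𝕜 := ℂ) (f i)
  refine isTraceClass_of_apply_eq_sum_of_norm_le_one A (fun i => starRingEnd ℂ (a i) * b i) u w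
    hu hw fun x => ?_
  simp only [hA, he, hf, inner_smul_left, smul_smul]
  congr 1; ext i; congr 1; ring

theorem isTraceClass_of_finiteDimensional_range (A : H →L[ℂ] H)
    (hA : FiniteDimensional ℂ (LinearMap.range (A : H →ₗ[ℂ] H))) : IsTraceClass A := by
  let b := stdOrthonormalBasis ℂ (LinearMap.range (A : H →ₗ[ℂ] H))
  refine isTraceClass_of_apply_eq_sum_inner_smul A (fun i => A.adjoint (b i)) (fun i => b i)
    fun x => ?_
  have hx := congrArg Subtype.val (b.sum_repr' ⟨A x, LinearMap.mem_range_self _ x⟩)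
  simp only [ContinuousLinearMap.adjoint_inner_left]
  simpa [Submodule.coe_inner] using hx.symm

theorem exists_ker_eq_orthogonal_and_range_eq {𝕜 E : Type*} [RCLike 𝕜] [NormedAddCommGroup E]
    [InnerProductSpace 𝕜 E] (K R : Submodule 𝕜 E) [FiniteDimensional 𝕜 K]
    [FiniteDimensional 𝕜 R] (h : finrank 𝕜 K = finrank 𝕜 R) :
    ∃ A : E →L[𝕜] E,
      LinearMap.ker (A : E →ₗ[𝕜] E) = Kᗮ ∧ LinearMap.range (A : E →ₗ[𝕜] E) = R := by
  let U : K ≃L[𝕜] R := (LinearEquiv.ofFinrankEq K R h).toContinuousLinearEquiv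
  refine ⟨R.subtypeL ∘L (U : K →L[𝕜] R) ∘L K.orthogonalProjectionOnto, ?_, ?_⟩
  · ext x
    simp
  · ext y
    simp only [LinearMap.mem_range, ContinuousLinearMap.coe_coe, ContinuousLinearMap.comp_apply,
      Submodule.subtypeL_apply]
    refine ⟨fun ⟨x, hx⟩ => hx ▸ Subtype.prop _, fun hy => ⟨U.symm ⟨y, hy⟩, ?_⟩⟩
    simp [K.orthogonalProjectionOnto_mem_subspace_eq_self]

/-- The family `{U_A : A trace class}` covers the space of index-zero Fredholm operators:
for every index-zero Fredholm operator `T` there is a trace class operator `A` with `T + A`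
invertible. -/
theorem exists_traceClass_add_isUnit
    (T : H →L[ℂ] H) (hT : IsFredholm T) (hT0 : HasIndexZero T) :
    ∃ A : H →L[ℂ] H, IsTraceClass A ∧ IsUnit (T + A) := by
  obtain ⟨hker, hclosed, hcoker⟩ := hT
  set K := LinearMap.ker (T : H →ₗ[ℂ] H)
  set R := LinearMap.range (T : H →ₗ[ℂ] H)
  have : CompleteSpace R := hclosed.completeSpace_coe
  have hcokerEquiv : (H ⧸ R) ≃ₗ[ℂ] Rᗮ := R.quotientEquivOfIsCompl Rᗮ R.isCompl_orthogonal
  have : FiniteDimensional ℂ Rᗮ := hcokerEquiv.finiteDimensional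
  obtain ⟨A, hAker, hArange⟩ :=
    exists_ker_eq_orthogonal_and_range_eq K Rᗮ (hT0.trans hcokerEquiv.finrank_eq)
  refine ⟨A, isTraceClass_of_finiteDimensional_range A (hArange ▸ inferInstance),
    ContinuousLinearMap.isUnit_iff_bijective.2 ?_⟩
  exact LinearMap.bijective_add_of_isCompl _ _ (hAker ▸ K.isCompl_orthogonal)
    (hArange ▸ R.isCompl_orthogonal)
end

section
/- Let T be a Fredholm operator of index zero and L, L' : Ker(T) → H two linear maps such that ρ_T∘L and ρ_T∘L' are isomorphisms onto Coker(T). Then (T + L∘π_T)^{-1}∘(T + L'∘π_T) − Id is a finite rank operator, and det_F((T + L∘π_T)^{-1}∘(T + L'∘π_T)) = det(a_{ij}), where (a_{ij}) is the matrix of the map (ρ_T∘L)^{-1}∘(ρ_T∘L') : Ker(T) → Ker(T) in any basis of Ker(T). -/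
open Module

variable {H : Type*} [NormedAddCommGroup H] [InnerProductSpace ℂ H] [CompleteSpace H]

/-!
Write `S = T + L∘π` and `S' = T + L'∘π`. Then `S⁻¹S' - 1 = S⁻¹(L' - L)∘π` factors through the
finite dimensional space `Ker T`, so by the Weinstein–Aronszajn identity
`det(1 + AB) = det(1 + BA)` its Fredholm determinant is `det(1 + π∘S⁻¹(L' - L))` on `Ker T`.
Since `ρ∘T = 0` we have `ρ∘S = ρL∘π`, hence `π∘S⁻¹ = (ρL)⁻¹∘ρ` and
`1 + π∘S⁻¹(L' - L) = (ρL)⁻¹∘ρL'`.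
-/

namespace LinearMap

theorem det_id_add_comp_comm {R M N : Type*} [CommRing R]
    [AddCommGroup M] [Module R M] [Module.Free R M] [Module.Finite R M]
    [AddCommGroup N] [Module R N] [Module.Free R N] [Module.Finite R N]
    (A : M →ₗ[R] N) (B : N →ₗ[R] M) :
    LinearMap.det (id + A ∘ₗ B) = LinearMap.det (id + B ∘ₗ A) := by
  classical
  let bM := Module.Free.chooseBasis R M
  let bN := Module.Free.chooseBasis R N
  rw [← det_toMatrix bN, ← det_toMatrix bM, map_add, map_add, toMatrix_id, toMatrix_id,
    toMatrix_comp bN bM bN, toMatrix_comp bM bN bM, Matrix.det_one_add_mul_comm]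

theorem det_id_add_restrict_of_eq_comp {R M U : Type*} [CommRing R]
    [AddCommGroup M] [Module R M] [AddCommGroup U] [Module R U] [Module.Free R U]
    [Module.Finite R U] {K : M →ₗ[R] M} {A : U →ₗ[R] M} {B : M →ₗ[R] U} (hK : K = A ∘ₗ B)
    {V : Submodule R M} [Module.Free R V] [Module.Finite R V] (hA : ∀ u, A u ∈ V)
    (hV : ∀ x ∈ V, K x ∈ V) :
    LinearMap.det (id + K.restrict hV) = LinearMap.det (id + B ∘ₗ A) := by
  subst hK
  have hfactor : (A ∘ₗ B).restrict hV = A.codRestrict V hA ∘ₗ B ∘ₗ V.subtype := rfl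
  rw [hfactor, det_id_add_comp_comm]
  rfl

section Retraction

variable {R E F : Type*} [Ring R] [AddCommGroup E] [Module R E] [AddCommGroup F] [Module R F]
  {T : E →ₗ[R] F} {P : E →ₗ[R] ker T} {L : ker T →ₗ[R] F}

theorem mkQ_range_add_comp_apply (x : E) :
    (range T).mkQ ((T + L ∘ₗ P) x) = (range T).mkQ (L (P x)) := by
  simp [(Submodule.Quotient.mk_eq_zero _).mpr (mem_range_self T x)]

theorem bijective_add_comp_of_bijective_mkQ_comp (hP : ∀ k : ker T, P k = k)
    (hL : Function.Bijective ((range T).mkQ ∘ₗ L)) : Function.Bijective (T + L ∘ₗ P) := by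
  constructor
  · refine (injective_iff_map_eq_zero _).mpr fun x hx => ?_
    have hPx : P x = 0 := hL.injective <| by
      simpa [hx] using (mkQ_range_add_comp_apply (L := L) (P := P) x).symm
    have hTx : T x = 0 := by simpa [hPx] using hx
    simpa [hP ⟨x, hTx⟩] using congrArg Subtype.val hPx
  · intro y
    obtain ⟨k, hk⟩ := hL.surjective ((range T).mkQ y)
    obtain ⟨z, hz⟩ : y - L k ∈ range T := (Submodule.Quotient.eq _).mp hk.symm
    refine ⟨z - P z + k, ?_⟩
    have hTk : ∀ k : ker T, T k = 0 := fun k => k.2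
    simp [hTk, hP, hz]

theorem comp_symm_eq_symm_comp_mkQ (hL : Function.Bijective ((range T).mkQ ∘ₗ L))
    (e : E ≃ₗ[R] F) (he : (e : E →ₗ[R] F) = T + L ∘ₗ P) :
    P ∘ₗ e.symm = (LinearEquiv.ofBijective _ hL).symm ∘ₗ (range T).mkQ := by
  refine LinearMap.ext fun y => ?_
  rw [comp_apply, comp_apply, LinearEquiv.coe_coe, LinearEquiv.coe_coe, LinearEquiv.eq_symm_apply,
    LinearEquiv.ofBijective_apply]
  calc (range T).mkQ (L (P (e.symm y))) = (range T).mkQ ((T + L ∘ₗ P) (e.symm y)) :=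
        (mkQ_range_add_comp_apply _).symm
    _ = (range T).mkQ y := by rw [← he, LinearEquiv.coe_coe, e.apply_symm_apply]

theorem symm_comp_add_comp_sub_id (e : E ≃ₗ[R] F) (he : (e : E →ₗ[R] F) = T + L ∘ₗ P)
    (L' : ker T →ₗ[R] F) :
    (e.symm : F →ₗ[R] E) ∘ₗ (T + L' ∘ₗ P) - id = (e.symm : F →ₗ[R] E) ∘ₗ (L' - L) ∘ₗ P := by
  ext x
  have hx : T x + L' (P x) = e x + (L' - L) (P x) := by
    rw [← LinearEquiv.coe_coe, he]; simp
  simp [hx]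

theorem id_add_comp_symm_comp_sub (hL : Function.Bijective ((range T).mkQ ∘ₗ L))
    (e : E ≃ₗ[R] F) (he : (e : E →ₗ[R] F) = T + L ∘ₗ P) (L' : ker T →ₗ[R] F) :
    id + P ∘ₗ (e.symm : F →ₗ[R] E) ∘ₗ (L' - L) =
      ((LinearEquiv.ofBijective _ hL).symm : (F ⧸ range T) →ₗ[R] ker T) ∘ₗ (range T).mkQ ∘ₗ L' := by
  rw [← comp_assoc, comp_symm_eq_symm_comp_mkQ hL e he]
  refine LinearMap.ext fun k => ?_
  have hk : (LinearEquiv.ofBijective _ hL).symm ((range T).mkQ (L k)) = k :=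
    LinearEquiv.ofBijective_symm_apply_apply _ k
  simp only [add_apply, id_apply, comp_apply, sub_apply, map_sub, LinearEquiv.coe_coe, hk,
    add_sub_cancel]

end Retraction

end LinearMap

theorem detF_inverse_mul_eq_det_general
    (detF : (H →L[ℂ] H) → ℂ)
    (hdet : ∀ (K : H →L[ℂ] H) (V : Submodule ℂ H), FiniteDimensional ℂ V →
      (∀ x, K x ∈ V) → ∀ hV : ∀ x ∈ V, K x ∈ V,
      detF (1 + K) = LinearMap.det (LinearMap.id + (K : H →ₗ[ℂ] H).restrict hV))
    (T : H →L[ℂ] H)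
    [FiniteDimensional ℂ (LinearMap.ker (T : H →ₗ[ℂ] H))] [CompleteSpace (LinearMap.ker (T : H →ₗ[ℂ] H))]
    (L L' : LinearMap.ker (T : H →ₗ[ℂ] H) →ₗ[ℂ] H)
    (hL : Function.Bijective ((LinearMap.range (T : H →ₗ[ℂ] H)).mkQ.comp L)) :
    FiniteDimensional ℂ (LinearMap.range
      ((Ring.inverse (T + (LinearMap.toContinuousLinearMap L).comp
          (LinearMap.ker (T : H →ₗ[ℂ] H)).orthogonalProjectionOnto) *
        (T + (LinearMap.toContinuousLinearMap L').comp
          (LinearMap.ker (T : H →ₗ[ℂ] H)).orthogonalProjectionOnto) - 1 : H →L[ℂ] H) : H →ₗ[ℂ] H)) ∧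
    detF (Ring.inverse (T + (LinearMap.toContinuousLinearMap L).comp
          (LinearMap.ker (T : H →ₗ[ℂ] H)).orthogonalProjectionOnto) *
        (T + (LinearMap.toContinuousLinearMap L').comp
          (LinearMap.ker (T : H →ₗ[ℂ] H)).orthogonalProjectionOnto)) =
      LinearMap.det
        (((LinearEquiv.ofBijective ((LinearMap.range (T : H →ₗ[ℂ] H)).mkQ.comp L) hL).symm :
            (H ⧸ LinearMap.range (T : H →ₗ[ℂ] H)) →ₗ[ℂ] LinearMap.ker (T : H →ₗ[ℂ] H)) ∘ₗ
          ((LinearMap.range (T : H →ₗ[ℂ] H)).mkQ.comp L')) := by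
  set P := (LinearMap.ker (T : H →ₗ[ℂ] H)).orthogonalProjectionOnto
  have hP : ∀ k : LinearMap.ker (T : H →ₗ[ℂ] H), P k = k :=
    Submodule.orthogonalProjectionOnto_mem_subspace_eq_self
  set S := T + (LinearMap.toContinuousLinearMap L).comp P
  have hS : Function.Bijective S := LinearMap.bijective_add_comp_of_bijective_mkQ_comp hP hL
  let e : H ≃L[ℂ] H :=
    .ofBijective S (LinearMap.ker_eq_bot.mpr hS.1) (LinearMap.range_eq_top.mpr hS.2)
  have hinv : Ring.inverse S = e.symm := by
    rw [ContinuousLinearMap.ringInverse_eq_inverse]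
    exact ContinuousLinearMap.inverse_equiv e
  set K := Ring.inverse S * (T + (LinearMap.toContinuousLinearMap L').comp P) - 1 with hKdef
  set A := (e.symm : H →ₗ[ℂ] H) ∘ₗ (L' - L)
  have hK : (K : H →ₗ[ℂ] H) = A ∘ₗ (P : H →ₗ[ℂ] _) := by
    rw [hKdef, hinv]
    exact LinearMap.symm_comp_add_comp_sub_id e.toLinearEquiv rfl L'
  have hKA : ∀ x, K x ∈ LinearMap.range A := fun x => by
    rw [← ContinuousLinearMap.coe_coe, hK]
    exact LinearMap.mem_range_self _ _
  refine ⟨by rw [hK]; exact Submodule.finiteDimensional_of_le (LinearMap.range_comp_le_range _ _), ?_⟩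
  rw [← add_sub_cancel (1 : H →L[ℂ] H) (Ring.inverse S * _),
    hdet K _ inferInstance hKA fun x _ => hKA x,
    LinearMap.det_id_add_restrict_of_eq_comp hK (LinearMap.mem_range_self A)]
  exact congrArg LinearMap.det (LinearMap.id_add_comp_symm_comp_sub hL e.toLinearEquiv rfl L')

/-- Let `T` be a Fredholm operator of index zero and `L, L' : Ker(T) → H` two linear maps such
that `ρ_T∘L` and `ρ_T∘L'` are isomorphisms onto `Coker(T)`.  Then
`(T + L∘π_T)⁻¹∘(T + L'∘π_T) − Id` is a finite rank operator, and
`det_F((T + L∘π_T)⁻¹∘(T + L'∘π_T)) = det (a_{ij})`, where `(a_{ij})` is the matrix of the map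
`(ρ_T∘L)⁻¹∘(ρ_T∘L') : Ker(T) → Ker(T)` (its determinant being `LinearMap.det` of that
endomorphism).  Here `det_F` is the Fredholm determinant, which on `Id + (finite rank)`
operators agrees with the determinant of the induced map on any finite dimensional invariant
subspace containing the range. -/
theorem detF_inverse_mul_eq_det
    (detF : (H →L[ℂ] H) → ℂ)
    (hdet : ∀ (K : H →L[ℂ] H) (V : Submodule ℂ H), FiniteDimensional ℂ V →
      (∀ x, K x ∈ V) → ∀ hV : ∀ x ∈ V, K x ∈ V,
      detF (1 + K) = LinearMap.det (LinearMap.id + (K : H →ₗ[ℂ] H).restrict hV))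
    (T : H →L[ℂ] H) (hT : IsFredholm T) (hT0 : HasIndexZero T)
    [FiniteDimensional ℂ (LinearMap.ker (T : H →ₗ[ℂ] H))] [CompleteSpace (LinearMap.ker (T : H →ₗ[ℂ] H))]
    (L L' : LinearMap.ker (T : H →ₗ[ℂ] H) →ₗ[ℂ] H)
    (hL : Function.Bijective ((LinearMap.range (T : H →ₗ[ℂ] H)).mkQ.comp L))
    (hL' : Function.Bijective ((LinearMap.range (T : H →ₗ[ℂ] H)).mkQ.comp L')) :
    FiniteDimensional ℂ (LinearMap.range
      ((Ring.inverse (T + (LinearMap.toContinuousLinearMap L).comp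
          (LinearMap.ker (T : H →ₗ[ℂ] H)).orthogonalProjectionOnto) *
        (T + (LinearMap.toContinuousLinearMap L').comp
          (LinearMap.ker (T : H →ₗ[ℂ] H)).orthogonalProjectionOnto) - 1 : H →L[ℂ] H) : H →ₗ[ℂ] H)) ∧
    detF (Ring.inverse (T + (LinearMap.toContinuousLinearMap L).comp
          (LinearMap.ker (T : H →ₗ[ℂ] H)).orthogonalProjectionOnto) *
        (T + (LinearMap.toContinuousLinearMap L').comp
          (LinearMap.ker (T : H →ₗ[ℂ] H)).orthogonalProjectionOnto)) =
      LinearMap.det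
        (((LinearEquiv.ofBijective ((LinearMap.range (T : H →ₗ[ℂ] H)).mkQ.comp L) hL).symm :
            (H ⧸ LinearMap.range (T : H →ₗ[ℂ] H)) →ₗ[ℂ] LinearMap.ker (T : H →ₗ[ℂ] H)) ∘ₗ
          ((LinearMap.range (T : H →ₗ[ℂ] H)).mkQ.comp L')) :=
  detF_inverse_mul_eq_det_general detF hdet T L L' hL
end

section
/- For any compact Hausdorff space X and continuous map f : X → F̂_*, the pullback f*(L_Q) of the Quillen determinant line bundle is trivial, where F̂_* is the nontrivial connected component of the space of selfadjoint Fredholm operators. -/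
open Module Bundle TensorProduct

variable {H : Type*} [NormedAddCommGroup H] [InnerProductSpace ℂ H] [CompleteSpace H]

/-- A (complex) line bundle is trivial if it admits a global linear trivialization. -/
def IsTrivialLineBundle {B : Type*} [TopologicalSpace B] (E : B → Type*)
    [TopologicalSpace (TotalSpace ℂ E)] [∀ b, AddCommMonoid (E b)] [∀ b, Module ℂ (E b)] :
    Prop :=
  ∃ e : Trivialization ℂ (Bundle.TotalSpace.proj (F := ℂ) (E := E)),
    e.baseSet = Set.univ ∧ e.IsLinear ℂ

/-- An isomorphism of complex line bundles: a fiberwise linear homeomorphism of total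
spaces. -/
def LineBundleIso {B : Type*} [TopologicalSpace B] (E F' : B → Type*)
    [TopologicalSpace (TotalSpace ℂ E)] [TopologicalSpace (TotalSpace ℂ F')]
    [∀ b, AddCommMonoid (E b)] [∀ b, Module ℂ (E b)]
    [∀ b, AddCommMonoid (F' b)] [∀ b, Module ℂ (F' b)] : Prop :=
  ∃ φ : ∀ b, E b ≃ₗ[ℂ] F' b,
    Continuous (fun p : TotalSpace ℂ E => (⟨p.proj, φ p.proj p.snd⟩ : TotalSpace ℂ F')) ∧
    Continuous (fun p : TotalSpace ℂ F' => (⟨p.proj, (φ p.proj).symm p.snd⟩ : TotalSpace ℂ E))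

/-- The fiber of the Quillen determinant line bundle at a Fredholm operator `T` of index zero:
`Λ^top Ker(T)* ⊗ Λ^top Coker(T)`. -/
abbrev QuillenFiber (T : {T : H →L[ℂ] H // IsFredholm T ∧ HasIndexZero T}) : Type _ :=
  (⋀[ℂ]^(Module.finrank ℂ (LinearMap.ker (T.1 : H →ₗ[ℂ] H)))
      (Module.Dual ℂ (LinearMap.ker (T.1 : H →ₗ[ℂ] H)))) ⊗[ℂ]
    (⋀[ℂ]^(Module.finrank ℂ (H ⧸ LinearMap.range (T.1 : H →ₗ[ℂ] H)))
      (H ⧸ LinearMap.range (T.1 : H →ₗ[ℂ] H)))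

/-- Membership in `F̂_*`, the nontrivial component of the space of selfadjoint Fredholm
operators: a selfadjoint Fredholm operator whose essential spectrum meets both `(0,∞)` and
`(−∞,0)` (by Weyl's criterion, `c` is in the essential spectrum iff `T − c·Id` is not
Fredholm). -/
def MemFStar (T : H →L[ℂ] H) : Prop :=
  IsSelfAdjoint T ∧ IsFredholm T ∧
    (∃ c : ℝ, 0 < c ∧ ¬ IsFredholm (T - (c : ℂ) • (1 : H →L[ℂ] H))) ∧
    (∃ c : ℝ, c < 0 ∧ ¬ IsFredholm (T - (c : ℂ) • (1 : H →L[ℂ] H)))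

/-!
For selfadjoint `T` and real `t ≠ 0` the spectrum of `(1 - t) T + i t` lies off the real axis, so
this operator is invertible; hence `t ↦ (1 - t) T + i t` is a path in `F₀` from `T` to `i · Id`,
and any continuous family `g` of selfadjoint operators in `F₀` is homotopic to a constant map.

Having a nowhere-vanishing section is a homotopy invariant for pullbacks to a compact Hausdorff
`X`: along a homotopy `Q : X × [0, 1] → F₀`, compactness and a Lebesgue number give `N` and a
finite open cover of `X` such that over each cover set every window `[c - 1/N, c]` of levels lies
in a single trivialization, and a partition of unity subordinate to the cover lowers the level of
a section from `c` to `c - 1/N` one cover set at a time. The constant map has a nowhere-vanishing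
section, hence so has `g`, and a line bundle with a nowhere-vanishing section is trivial.
-/

open Set Topology Filter

def HasNonvanishingSection (F : Type*) {B X : Type*} [TopologicalSpace X] (E : B → Type*)
    [TopologicalSpace (TotalSpace F E)] [∀ b, Zero (E b)] (q : X → B) : Prop :=
  ∃ v : ∀ x, E (q x), (Continuous fun x => TotalSpace.mk' F (q x) (v x)) ∧ ∀ x, v x ≠ 0

theorem cast_fiber_ne_zero {B : Type*} {E : B → Type*} [∀ b, Zero (E b)] {b b' : B}
    (h : b = b') {w : E b} (hw : w ≠ 0) : cast (congrArg E h) w ≠ 0 := by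
  subst h
  exact hw

theorem HasNonvanishingSection.pullback {F B X : Type*} [TopologicalSpace X]
    {E : B → Type*} [TopologicalSpace (TotalSpace F E)] [∀ b, AddCommMonoid (E b)] {g : X → B}
    (h : HasNonvanishingSection F E g) : HasNonvanishingSection F (g *ᵖ E) id := by
  obtain ⟨v, hvc, hv⟩ := h
  refine ⟨v, ?_, hv⟩
  rw [(inducing_pullbackTotalSpaceEmbedding F E g).continuous_iff]
  exact continuous_id.prodMk hvc

section LineBundle

variable {𝕜 : Type*} [NontriviallyNormedField 𝕜] {X : Type*} [TopologicalSpace X]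
  {L : X → Type*} [TopologicalSpace (TotalSpace 𝕜 L)] [∀ x, AddCommMonoid (L x)]
  [∀ x, Module 𝕜 (L x)]

theorem Bundle.Trivialization.snd_div_snd_smul (e : Trivialization 𝕜 (π 𝕜 L)) [e.IsLinear 𝕜]
    {x : X} (hx : x ∈ e.baseSet) {v : L x} (hv : v ≠ 0) (w : L x) :
    ((e ⟨x, w⟩).2 / (e ⟨x, v⟩).2) • v = w := by
  apply (e.linearEquivAt 𝕜 x hx).injective
  have hev : (e ⟨x, v⟩).2 ≠ 0 := (e.linearEquivAt 𝕜 x hx).map_ne_zero_iff.2 hv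
  rw [map_smul, e.linearEquivAt_apply, e.linearEquivAt_apply, smul_eq_mul, div_mul_cancel₀ _ hev]

variable [∀ x, TopologicalSpace (L x)] [FiberBundle 𝕜 L] [VectorBundle 𝕜 𝕜 L]

theorem hasNonvanishingSection_const {Y : Type*} [TopologicalSpace Y] (x : X) :
    HasNonvanishingSection 𝕜 L fun _ : Y => x := by
  set e := trivializationAt 𝕜 L x
  have hx : x ∈ e.baseSet := FiberBundle.mem_baseSet_trivializationAt' x
  refine ⟨fun _ => e.symm x 1, continuous_const, fun _ => ?_⟩
  rw [← e.linearEquivAt_symm_apply (R := 𝕜) _ hx]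
  exact (e.linearEquivAt 𝕜 x hx).symm.map_ne_zero_iff.2 one_ne_zero

variable (𝕜) in
noncomputable def sectionCoord (v : ∀ x, L x) (p : TotalSpace 𝕜 L) : 𝕜 :=
  (trivializationAt 𝕜 L p.proj p).2 / (trivializationAt 𝕜 L p.proj ⟨p.proj, v p.proj⟩).2

variable {v : ∀ x, L x}

theorem sectionCoord_smul (hv : ∀ x, v x ≠ 0) (p : TotalSpace 𝕜 L) :
    sectionCoord 𝕜 v p • v p.proj = p.snd :=
  (trivializationAt 𝕜 L p.proj).snd_div_snd_smul (FiberBundle.mem_baseSet_trivializationAt' _)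
    (hv _) p.snd

theorem sectionCoord_eq_of_smul_eq (hv : ∀ x, v x ≠ 0) {x : X} {z : 𝕜} {w : L x}
    (h : z • v x = w) : sectionCoord 𝕜 v ⟨x, w⟩ = z := by
  set e := trivializationAt 𝕜 L x
  have hx : x ∈ e.baseSet := FiberBundle.mem_baseSet_trivializationAt' x
  have hev : (e ⟨x, v x⟩).2 ≠ 0 := (e.linearEquivAt 𝕜 x hx).map_ne_zero_iff.2 (hv x)
  change (e ⟨x, w⟩).2 / (e ⟨x, v x⟩).2 = z
  rw [← h, ← e.linearEquivAt_apply (R := 𝕜) _ hx, map_smul, e.linearEquivAt_apply, smul_eq_mul,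
    mul_div_cancel_right₀ _ hev]

theorem sectionCoord_eq_snd_div_snd (hv : ∀ x, v x ≠ 0) (e : Trivialization 𝕜 (π 𝕜 L))
    [e.IsLinear 𝕜] {p : TotalSpace 𝕜 L} (hp : p.proj ∈ e.baseSet) :
    sectionCoord 𝕜 v p = (e p).2 / (e ⟨p.proj, v p.proj⟩).2 :=
  sectionCoord_eq_of_smul_eq hv (e.snd_div_snd_smul hp (hv _) p.snd)

theorem continuous_sectionCoord (hvc : Continuous fun x => TotalSpace.mk' 𝕜 x (v x))
    (hv : ∀ x, v x ≠ 0) : Continuous (sectionCoord 𝕜 v) := by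
  refine continuous_iff_continuousAt.2 fun p₀ => ?_
  set e := trivializationAt 𝕜 L p₀.proj
  have hp₀ : p₀.proj ∈ e.baseSet := FiberBundle.mem_baseSet_trivializationAt' _
  have hO : (π 𝕜 L) ⁻¹' e.baseSet ∈ 𝓝 p₀ :=
    (e.open_baseSet.preimage (FiberBundle.continuous_proj 𝕜 L)).mem_nhds hp₀
  have hnum : ContinuousAt (fun p => (e p).2) p₀ :=
    continuous_snd.continuousAt.comp (e.continuousAt (e.mem_source.2 hp₀))
  have hden : ContinuousAt (fun p : TotalSpace 𝕜 L => (e ⟨p.proj, v p.proj⟩).2) p₀ :=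
    ((FiberBundle.continuousAt_section 𝕜 p₀.proj).1 hvc.continuousAt).comp
      (FiberBundle.continuous_proj 𝕜 L).continuousAt
  refine (hnum.div hden ?_).congr (eventuallyEq_of_mem hO fun p hp => ?_)
  · exact (e.linearEquivAt 𝕜 _ hp₀).map_ne_zero_iff.2 (hv _)
  · exact (sectionCoord_eq_snd_div_snd hv e hp).symm

theorem continuous_smul_section (hvc : Continuous fun x => TotalSpace.mk' 𝕜 x (v x)) :
    Continuous fun q : X × 𝕜 => TotalSpace.mk' 𝕜 q.1 (q.2 • v q.1) := by
  refine continuous_iff_continuousAt.2 fun q₀ => ?_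
  set e := trivializationAt 𝕜 L q₀.1
  have hO : Prod.fst ⁻¹' e.baseSet ∈ 𝓝 q₀ :=
    (e.open_baseSet.preimage continuous_fst).mem_nhds
      (FiberBundle.mem_baseSet_trivializationAt' _)
  have hcoord : ContinuousAt (fun q : X × 𝕜 => q.2 * (e ⟨q.1, v q.1⟩).2) q₀ :=
    continuous_snd.continuousAt.mul (((FiberBundle.continuousAt_section 𝕜 q₀.1).1
      hvc.continuousAt).comp continuous_fst.continuousAt)
  refine (FiberBundle.continuousAt_totalSpace 𝕜 _).2 ⟨continuous_fst.continuousAt,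
    hcoord.congr (eventuallyEq_of_mem hO fun q hq => ?_)⟩
  change q.2 * (e ⟨q.1, v q.1⟩).2 = (e ⟨q.1, q.2 • v q.1⟩).2
  rw [← e.linearEquivAt_apply (R := 𝕜) _ hq, ← e.linearEquivAt_apply (R := 𝕜) _ hq, map_smul,
    smul_eq_mul]

theorem HasNonvanishingSection.exists_trivialization (h : HasNonvanishingSection 𝕜 L id) :
    ∃ e : Trivialization 𝕜 (π 𝕜 L), e.baseSet = univ ∧ e.IsLinear 𝕜 := by
  obtain ⟨v, hvc, hv⟩ : ∃ v : ∀ x, L x,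
      (Continuous fun x => TotalSpace.mk' 𝕜 x (v x)) ∧ ∀ x, v x ≠ 0 := h
  refine ⟨{ toFun := fun p => (p.proj, sectionCoord 𝕜 v p)
            invFun := fun q => ⟨q.1, q.2 • v q.1⟩
            source := univ
            target := univ
            map_source' := fun _ _ => mem_univ _
            map_target' := fun _ _ => mem_univ _
            left_inv' := fun p _ => TotalSpace.ext rfl (heq_of_eq (sectionCoord_smul hv p))
            right_inv' := fun q _ => Prod.ext rfl (sectionCoord_eq_of_smul_eq hv rfl)
            open_source := isOpen_univ
            open_target := isOpen_univ
            continuousOn_toFun := ((FiberBundle.continuous_proj 𝕜 L).prodMk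
              (continuous_sectionCoord hvc hv)).continuousOn
            continuousOn_invFun := (continuous_smul_section hvc).continuousOn
            baseSet := univ
            open_baseSet := isOpen_univ
            source_eq := rfl
            target_eq := univ_prod_univ.symm
            proj_toFun := fun _ _ => rfl }, rfl, ⟨fun x _ => ⟨fun w w' => ?_, fun r w => ?_⟩⟩⟩
  · change sectionCoord 𝕜 v ⟨x, w + w'⟩ = sectionCoord 𝕜 v ⟨x, w⟩ + sectionCoord 𝕜 v ⟨x, w'⟩
    exact sectionCoord_eq_of_smul_eq hv (by
      rw [add_smul, sectionCoord_smul hv, sectionCoord_smul hv])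
  · change sectionCoord 𝕜 v ⟨x, r • w⟩ = r • sectionCoord 𝕜 v ⟨x, w⟩
    exact sectionCoord_eq_of_smul_eq hv (by rw [smul_eq_mul, mul_smul, sectionCoord_smul hv])

end LineBundle

section HomotopyInvariance

variable {𝕜 : Type*} [NontriviallyNormedField 𝕜] {F : Type*} [NormedAddCommGroup F]
  [NormedSpace 𝕜 F] {B : Type*} [TopologicalSpace B] {X : Type*} [TopologicalSpace X]
  {E : B → Type*} [TopologicalSpace (TotalSpace F E)] [∀ b, AddCommMonoid (E b)]
  [∀ b, Module 𝕜 (E b)]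

variable (𝕜) in
theorem HasNonvanishingSection.of_eqOn_compl {q₀ q₁ : X → B} (hq₁ : Continuous q₁)
    {U C : Set X} (hU : IsOpen U) (hC : IsClosed C) (hCU : C ⊆ U) (hq : EqOn q₀ q₁ Cᶜ)
    (e : Trivialization F (π F E)) [e.IsLinear 𝕜] (h₀ : MapsTo q₀ U e.baseSet)
    (h₁ : MapsTo q₁ U e.baseSet) (h : HasNonvanishingSection F E q₀) :
    HasNonvanishingSection F E q₁ := by
  classical
  obtain ⟨v, hvc, hv⟩ := h
  have hqU : EqOn q₀ q₁ Uᶜ := hq.mono (compl_subset_compl.2 hCU)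
  let v₁ : ∀ x, E (q₁ x) := fun x =>
    if hx : x ∈ U then e.symm (q₁ x) (e ⟨q₀ x, v x⟩).2 else cast (congrArg E (hqU hx)) (v x)
  refine ⟨v₁, ?_, fun x => ?_⟩
  · have hv₁U : ContinuousOn (fun x => TotalSpace.mk' F (q₁ x) (v₁ x)) U := by
      have hcoord : ContinuousOn (fun x => (e ⟨q₀ x, v x⟩).2) U :=
        continuous_snd.comp_continuousOn
          (e.continuousOn.comp hvc.continuousOn fun x hx => e.mem_source.2 (h₀ hx))
      refine (e.continuousOn_symm.comp (hq₁.continuousOn.prodMk hcoord)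
        fun x hx => ⟨h₁ hx, mem_univ _⟩).congr fun x hx => ?_
      simp only [v₁, dif_pos hx]
      rfl
    have hv₁C : ContinuousOn (fun x => TotalSpace.mk' F (q₁ x) (v₁ x)) Cᶜ := by
      refine hvc.continuousOn.congr fun x hx => ?_
      by_cases hxU : x ∈ U
      · simp only [v₁, dif_pos hxU]
        refine (e.mk_symm (h₁ hxU) _).trans ?_
        rw [← hq hx]
        exact e.symm_apply_mk_proj (x := ⟨q₀ x, v x⟩) (e.mem_source.2 (h₀ hxU))
      · simp only [v₁, dif_neg hxU]
        exact TotalSpace.mk_cast (hqU hxU) (v x)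
    have hcover : U ∪ Cᶜ = univ :=
      eq_univ_of_univ_subset (by rw [← union_compl_self C]; exact union_subset_union_left _ hCU)
    rw [← continuousOn_univ, ← hcover]
    exact hv₁U.union_of_isOpen hv₁C hU hC.isOpen_compl
  · by_cases hx : x ∈ U
    · simp only [v₁, dif_pos hx]
      rw [← e.linearEquivAt_symm_apply (R := 𝕜) _ (h₁ hx),
        ← e.linearEquivAt_apply (R := 𝕜) _ (h₀ hx), LinearEquiv.map_ne_zero_iff,
        LinearEquiv.map_ne_zero_iff]
      exact hv x
    · simp only [v₁, dif_neg hx]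
      exact cast_fiber_ne_zero (hqU hx) (hv x)

variable (𝕜) in
theorem HasNonvanishingSection.lower_level {ι : Type*} [Fintype ι] {Q : X × ℝ → B}
    (hQ : Continuous Q) {U : ι → Set X} (hU : ∀ i, IsOpen (U i)) (ρ : PartitionOfUnity ι X)
    (hρ : ρ.IsSubordinate U) {c h : ℝ} (hh : 0 ≤ h)
    (htriv : ∀ i, ∃ e : Trivialization F (π F E), e.IsLinear 𝕜 ∧
      ∀ x ∈ U i, ∀ s ∈ Icc (c - h) c, Q (x, s) ∈ e.baseSet)
    (hc : HasNonvanishingSection F E fun x => Q (x, c)) :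
    HasNonvanishingSection F E fun x => Q (x, c - h) := by
  classical
  have hsum : ∀ (s : Finset ι) x, ∑ i ∈ s, ρ i x ∈ Icc (0 : ℝ) 1 := fun s x =>
    ⟨Finset.sum_nonneg fun i _ => ρ.nonneg i x,
      (Finset.sum_le_univ_sum_of_nonneg fun i => ρ.nonneg i x).trans
        ((finsum_eq_sum_of_fintype _).symm.trans_le (ρ.sum_le_one x))⟩
  have hlevel : ∀ (s : Finset ι) x, c - h * ∑ i ∈ s, ρ i x ∈ Icc (c - h) c := fun s x =>
    ⟨by nlinarith [(hsum s x).2], by nlinarith [(hsum s x).1]⟩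
  have hQc : ∀ s : Finset ι, Continuous fun x => Q (x, c - h * ∑ i ∈ s, ρ i x) := fun s =>
    hQ.comp (continuous_id.prodMk (continuous_const.sub (continuous_const.mul
      (continuous_finsetSum _ fun i _ => (ρ i).continuous))))
  suffices ∀ s : Finset ι, HasNonvanishingSection F E fun x => Q (x, c - h * ∑ i ∈ s, ρ i x) by
    simpa [← finsum_eq_sum_of_fintype, ρ.sum_eq_one (mem_univ _)] using this Finset.univ
  intro s
  induction s using Finset.induction_on with
  | empty => simpa using hc
  | insert j s hj ih =>
    -- adding `ρ j` moves the level only on `tsupport (ρ j) ⊆ U j`, inside one trivialization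
    obtain ⟨e, he, hQe⟩ := htriv j
    refine ih.of_eqOn_compl 𝕜 (hQc _) (hU j) (isClosed_tsupport _) (hρ j) (fun x hx => ?_) e
      (fun x hx => hQe x hx _ (hlevel s x)) (fun x hx => hQe x hx _ (hlevel _ x))
    simp [Finset.sum_insert hj, image_eq_zero_of_notMem_tsupport hx]

variable [∀ b, TopologicalSpace (E b)] [FiberBundle F E]

variable (𝕜 F E) in
theorem exists_trivialization_tube [VectorBundle 𝕜 F E] {Q : X × ℝ → B} (hQ : Continuous Q)
    (x : X) :
    ∃ U : Set X, IsOpen U ∧ x ∈ U ∧ ∃ δ > 0, ∀ t ∈ Icc (0 : ℝ) 1,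
      ∃ e : Trivialization F (π F E), e.IsLinear 𝕜 ∧
        ∀ y ∈ U, ∀ s ∈ Metric.ball t δ, Q (y, s) ∈ e.baseSet := by
  have hnhds : ∀ t : ℝ, ∃ u : Set X, IsOpen u ∧ x ∈ u ∧ ∃ ε > 0,
      u ×ˢ Metric.ball t ε ⊆ Q ⁻¹' (trivializationAt F E (Q (x, t))).baseSet := by
    intro t
    have hmem : Q ⁻¹' (trivializationAt F E (Q (x, t))).baseSet ∈ 𝓝 (x, t) :=
      ((trivializationAt F E _).open_baseSet.preimage hQ).mem_nhds
        (FiberBundle.mem_baseSet_trivializationAt' _)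
    obtain ⟨u, w, hu, hxu, hw, htw, huw⟩ := mem_nhds_prod_iff'.1 hmem
    obtain ⟨ε, hε, hball⟩ := Metric.isOpen_iff.1 hw t htw
    exact ⟨u, hu, hxu, ε, hε, (prod_mono subset_rfl hball).trans huw⟩
  choose u hu hxu ε hε hsub using hnhds
  obtain ⟨S, hS⟩ := isCompact_Icc.elim_finite_subcover (fun t => Metric.ball t (ε t))
    (fun _ => Metric.isOpen_ball) fun t _ => mem_iUnion.2 ⟨t, Metric.mem_ball_self (hε t)⟩
  obtain ⟨δ, hδ, hleb⟩ := lebesgue_number_lemma_of_metric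
    (c := fun t : S => Metric.ball t.1 (ε t)) isCompact_Icc (fun _ => Metric.isOpen_ball)
    fun s hs => by
      obtain ⟨t, ht, hst⟩ := mem_iUnion₂.1 (hS hs)
      exact mem_iUnion.2 ⟨⟨t, ht⟩, hst⟩
  refine ⟨⋂ t ∈ S, u t, isOpen_biInter_finset fun t _ => hu t, mem_iInter₂.2 fun t _ => hxu t,
    δ, hδ, fun t ht => ?_⟩
  obtain ⟨⟨t', ht'⟩, hball⟩ := hleb t ht
  exact ⟨_, inferInstance, fun y hy s hs => hsub t' ⟨mem_iInter₂.1 hy t' ht', hball hs⟩⟩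

variable (𝕜) in
theorem ContinuousMap.Homotopic.hasNonvanishingSection [VectorBundle 𝕜 F E] [CompactSpace X]
    [T2Space X] {f₀ f₁ : C(X, B)} (hf : f₀.Homotopic f₁) (h₁ : HasNonvanishingSection F E f₁) :
    HasNonvanishingSection F E f₀ := by
  obtain ⟨Φ⟩ := hf
  set Q : X × ℝ → B := fun p => Φ.extend p.2 p.1
  have hQ : Continuous Q := by fun_prop
  choose U hU hxU δ hδ htube using exists_trivialization_tube 𝕜 F E hQ
  obtain ⟨S, hS⟩ := isCompact_univ.elim_finite_subcover U hU fun x _ => mem_iUnion.2 ⟨x, hxU x⟩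
  obtain ⟨ρ, hρ⟩ := PartitionOfUnity.exists_isSubordinate isClosed_univ (fun i : S => U i)
    (fun i => hU i) fun x _ => by
      obtain ⟨i, hi, hx⟩ := mem_iUnion₂.1 (hS (mem_univ x))
      exact mem_iUnion.2 ⟨⟨i, hi⟩, hx⟩
  obtain ⟨N, hN, hNδ⟩ : ∃ N : ℕ, 0 < N ∧ ∀ i ∈ S, 1 / δ i < N :=
    ((eventually_gt_atTop 0).and ((Finset.eventually_all S).2 fun i _ =>
      tendsto_natCast_atTop_atTop.eventually_gt_atTop (1 / δ i))).exists
  have hN' : (0 : ℝ) < N := Nat.cast_pos.2 hN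
  have hlevels : ∀ k ≤ N, HasNonvanishingSection F E fun x => Q (x, 1 - k / N) := by
    intro k
    induction k with
    | zero => intro; simpa [Q, Φ.extend_apply_of_one_le le_rfl] using h₁
    | succ k ih =>
      intro hk
      have hk' : (k : ℝ) + 1 ≤ N := by exact_mod_cast hk
      have hlow := (ih (Nat.le_of_succ_le hk)).lower_level 𝕜 hQ (fun i : S => hU i) ρ hρ
        (h := 1 / N) (by positivity) fun i => ?_
      · convert hlow using 4
        push_cast
        ring
      have hkN : (k : ℝ) / N ≤ 1 := (div_le_one hN').2 (by linarith)
      have hkN' : (0 : ℝ) ≤ k / N := by positivity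
      obtain ⟨e, he, hQe⟩ := htube i (1 - k / N) ⟨by linarith, by linarith⟩
      refine ⟨e, he, fun x hx s hs => hQe x hx s ?_⟩
      have hδN : 1 / N < δ i := (one_div_lt (hδ i) hN').1 (hNδ i i.2)
      rw [Metric.mem_ball, Real.dist_eq, abs_lt]
      constructor <;> linarith [hs.1, hs.2]
  simpa [Q, div_self hN'.ne', Φ.extend_apply_of_le_zero le_rfl] using hlevels N le_rfl

end HomotopyInvariance

theorem IsSelfAdjoint.isUnit_add_mul_I_smul_one {A : Type*} [CStarAlgebra A] {a : A}
    (ha : IsSelfAdjoint a) {t : ℝ} (ht : t ≠ 0) :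
    IsUnit (a + ((t : ℂ) * Complex.I) • (1 : A)) := by
  have hspec : -((t : ℂ) * Complex.I) ∉ spectrum ℂ a := fun hmem => ht (by
    simpa using ha.im_eq_zero_of_mem_spectrum hmem)
  have h := (spectrum.notMem_iff.1 hspec).neg
  rwa [Algebra.algebraMap_eq_smul_one, neg_sub, neg_smul, sub_neg_eq_add] at h

theorem isFredholm_and_hasIndexZero_of_isUnit {T : H →L[ℂ] H} (hT : IsUnit T) :
    IsFredholm T ∧ HasIndexZero T := by
  obtain ⟨hinj, hsurj⟩ := ContinuousLinearMap.isUnit_iff_bijective.1 hT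
  have hker : LinearMap.ker (T : H →ₗ[ℂ] H) = ⊥ := LinearMap.ker_eq_bot.2 hinj
  have hrange : LinearMap.range (T : H →ₗ[ℂ] H) = ⊤ := LinearMap.range_eq_top.2 hsurj
  refine ⟨⟨?_, ?_, ?_⟩, ?_⟩
  · rw [hker]
    infer_instance
  · rw [hrange, Submodule.top_coe]
    exact isClosed_univ
  · rw [hrange]
    infer_instance
  · rw [HasIndexZero, hker, hrange, finrank_bot, finrank_zero_of_subsingleton]

theorem ContinuousMap.exists_homotopic_const_of_isSelfAdjoint {X : Type*} [TopologicalSpace X]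
    (g : C(X, {T : H →L[ℂ] H // IsFredholm T ∧ HasIndexZero T}))
    (hg : ∀ x, IsSelfAdjoint (g x).1) : ∃ c, g.Homotopic (ContinuousMap.const X c) := by
  have hmem : ∀ (t : ℝ) x, IsFredholm ((1 - t) • (g x).1 + ((t : ℂ) * Complex.I) • 1) ∧
      HasIndexZero ((1 - t) • (g x).1 + ((t : ℂ) * Complex.I) • 1) := by
    intro t x
    rcases eq_or_ne t 0 with rfl | ht
    · simpa using (g x).2
    · exact isFredholm_and_hasIndexZero_of_isUnit
        (((IsSelfAdjoint.all (1 - t)).smul (hg x)).isUnit_add_mul_I_smul_one ht)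
  have hI : IsUnit (Complex.I • 1 : H →L[ℂ] H) := by
    simpa using (IsSelfAdjoint.zero (H →L[ℂ] H)).isUnit_add_mul_I_smul_one one_ne_zero
  exact ⟨⟨_, isFredholm_and_hasIndexZero_of_isUnit hI⟩, ⟨{
    toFun := fun p => ⟨(1 - (p.1 : ℝ)) • (g p.2).1 + (((p.1 : ℝ) : ℂ) * Complex.I) • 1, hmem _ _⟩
    continuous_toFun := by fun_prop
    map_zero_left := fun x => by ext1; simp
    map_one_left := fun x => by ext1; simp }⟩⟩

theorem pullback_quillen_trivial_on_FStar_general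
    {X : Type*} [TopologicalSpace X] [CompactSpace X] [T2Space X]
    (E : {T : H →L[ℂ] H // IsFredholm T ∧ HasIndexZero T} → Type)
    [TopologicalSpace (TotalSpace ℂ E)] [∀ T, AddCommGroup (E T)] [∀ T, Module ℂ (E T)]
    [∀ T, TopologicalSpace (E T)] [FiberBundle ℂ E] [VectorBundle ℂ ℂ E]
    (f : X → {T : H →L[ℂ] H // MemFStar T})
    (g : X → {T : H →L[ℂ] H // IsFredholm T ∧ HasIndexZero T})
    (hg : Continuous g) (hgf : ∀ x, (g x).1 = (f x).1) :
    IsTrivialLineBundle (g *ᵖ E) := by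
  let G : C(X, {T : H →L[ℂ] H // IsFredholm T ∧ HasIndexZero T}) := ⟨g, hg⟩
  have hsa : ∀ x, IsSelfAdjoint (G x).1 := fun x => hgf x ▸ (f x).2.1
  obtain ⟨c, hc⟩ := G.exists_homotopic_const_of_isSelfAdjoint hsa
  have hsection : HasNonvanishingSection ℂ E G :=
    hc.hasNonvanishingSection ℂ (hasNonvanishingSection_const c)
  exact hsection.pullback.exists_trivialization

/-- For any compact Hausdorff space `X` and continuous map `f : X → F̂_*`, the pullback
`f*(L_Q)` of the Quillen determinant line bundle is trivial.  Here `E` is the Quillen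
determinant line bundle over `F₀` (a line bundle whose fiber at `T` is
`Λ^top Ker(T)* ⊗ Λ^top Coker(T)`), and the pullback along `f` is expressed through any
(necessarily unique) continuous lift `g : X → F₀` of `f` through the inclusion
`F̂_* ↪ F₀`. -/
theorem pullback_quillen_trivial_on_FStar
    [TopologicalSpace.SeparableSpace H]
    {X : Type*} [TopologicalSpace X] [CompactSpace X] [T2Space X]
    (E : {T : H →L[ℂ] H // IsFredholm T ∧ HasIndexZero T} → Type)
    [TopologicalSpace (TotalSpace ℂ E)] [∀ T, AddCommGroup (E T)] [∀ T, Module ℂ (E T)]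
    [∀ T, TopologicalSpace (E T)] [FiberBundle ℂ E] [VectorBundle ℂ ℂ E]
    (hfiber : ∀ T, Nonempty (E T ≃ₗ[ℂ] QuillenFiber T))
    (f : X → {T : H →L[ℂ] H // MemFStar T}) (hf : Continuous f)
    (g : X → {T : H →L[ℂ] H // IsFredholm T ∧ HasIndexZero T})
    (hg : Continuous g) (hgf : ∀ x, (g x).1 = (f x).1) :
    IsTrivialLineBundle (g *ᵖ E) :=
  pullback_quillen_trivial_on_FStar_general E f g hg hgf
end

section
/- Let λ, μ be closed Lagrangian subspaces forming a Fredholm pair and set p_λ(μ) = P(μ^⊥) + P(λ^⊥), where P denotes orthogonal projection. Then p_λ(μ) is a nonnegative selfadjoint Fredholm operator on H, Ker(p_λ(μ)) = λ∩μ, and Coker(p_λ(μ)) ≅ H/(λ^⊥ + μ^⊥) ≅ λ/(λ ∩ (λ^⊥ + μ^⊥)). -/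
/-!
For a Lagrangian `λ` we have `λ^⊥ = Jλ`, so `λ^⊥ + μ^⊥ = J(λ + μ)` is closed and of finite
codimension. For closed `K, L` with closed sum, `T = P(K) + P(L)` satisfies
`⟪T x, x⟫ = ‖P(K) x‖² + ‖P(L) x‖²`, whence `ker T = K^⊥ ∩ L^⊥`. By the open mapping theorem each
`x ∈ K + L` splits as `a + b` with `‖a‖, ‖b‖ ≤ C ‖x‖`, so `‖x‖² = ⟪P(K) x, a⟫ + ⟪P(L) x, b⟫` makes
`T` coercive on `K + L`, and Lax–Milgram gives `range T = K + L`. Take `K = μ^⊥`, `L = λ^⊥`.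
The last isomorphism holds because `λ + λ^⊥ = H`.
-/

open Module RealInnerProductSpace

variable {H : Type*} [NormedAddCommGroup H] [InnerProductSpace ℝ H] [CompleteSpace H]

/-- A closed Lagrangian subspace of the real symplectic Hilbert space `H` with symplectic
form `ω(x,y) = ⟪J x, y⟫`: a closed subspace which equals its own `ω`-annihilator. -/
def IsLagrangian (J : H →L[ℝ] H) (lam : Submodule ℝ H) : Prop :=
  IsClosed (lam : Set H) ∧ ∀ x : H, x ∈ lam ↔ ∀ y ∈ lam, ⟪J x, y⟫ = 0

/-- The pair `(lam, mu)` is a Fredholm pair of subspaces. -/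
def IsFredholmPair (lam mu : Submodule ℝ H) : Prop :=
  FiniteDimensional ℝ ↥(lam ⊓ mu) ∧ IsClosed ((lam ⊔ mu : Submodule ℝ H) : Set H) ∧
    FiniteDimensional ℝ (H ⧸ (lam ⊔ mu))

/-- A bounded real-linear operator is Fredholm. -/
def IsFredholmR (T : H →L[ℝ] H) : Prop :=
  FiniteDimensional ℝ (LinearMap.ker (T : H →ₗ[ℝ] H)) ∧ IsClosed (LinearMap.range (T : H →ₗ[ℝ] H) : Set H) ∧
    FiniteDimensional ℝ (H ⧸ LinearMap.range (T : H →ₗ[ℝ] H))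

/-- The orthogonal projection onto a closed subspace, as an operator `H → H`. -/
noncomputable def projCLM (lam : Submodule ℝ H) [CompleteSpace lam] : H →L[ℝ] H :=
  lam.subtypeL.comp (lam.orthogonalProjectionOnto)

/-- The conjugation `τ_λ = 2P(λ) − Id` determined by the real structure `λ`. -/
noncomputable def conjOf (lam : Submodule ℝ H) [CompleteSpace lam] : H →L[ℝ] H :=
  (2 : ℝ) • projCLM lam - 1

theorem projCLM_eq_starProjection {E : Type*} [NormedAddCommGroup E] [InnerProductSpace ℝ E]
    (K : Submodule ℝ E) [CompleteSpace K] :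
    projCLM K = K.starProjection := rfl

theorem Submodule.exists_add_eq_norm_le_of_isClosed_sup {𝕜 E : Type*}
    [NontriviallyNormedField 𝕜] [NormedAddCommGroup E] [NormedSpace 𝕜 E] [CompleteSpace E]
    (K L : Submodule 𝕜 E) [CompleteSpace K] [CompleteSpace L]
    (hKL : IsClosed ((K ⊔ L : Submodule 𝕜 E) : Set E)) :
    ∃ C > 0, ∀ x ∈ K ⊔ L, ∃ a ∈ K, ∃ b ∈ L, a + b = x ∧ ‖a‖ ≤ C * ‖x‖ ∧ ‖b‖ ≤ C * ‖x‖ := by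
  have : CompleteSpace (K ⊔ L : Submodule 𝕜 E) := hKL.completeSpace_coe
  let S : K × L →L[𝕜] (K ⊔ L : Submodule 𝕜 E) :=
    (K.subtypeL.coprod L.subtypeL).codRestrict _
      fun p => add_mem (Submodule.mem_sup_left p.1.2) (Submodule.mem_sup_right p.2.2)
  have hS : Function.Surjective S := by
    rintro ⟨x, hx⟩
    obtain ⟨a, ha, b, hb, rfl⟩ := Submodule.mem_sup.1 hx
    exact ⟨(⟨a, ha⟩, ⟨b, hb⟩), rfl⟩
  obtain ⟨C, hC, hpre⟩ := S.exists_preimage_norm_le hS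
  refine ⟨C, hC, fun x hx => ?_⟩
  obtain ⟨⟨a, b⟩, hab, hnorm⟩ := hpre ⟨x, hx⟩
  exact ⟨a, a.2, b, b.2, congrArg Subtype.val hab, (norm_fst_le _).trans hnorm,
    (norm_snd_le _).trans hnorm⟩

section SumOfProjections

variable {E : Type*} [NormedAddCommGroup E] [InnerProductSpace ℝ E] (K L : Submodule ℝ E)

section

variable [K.HasOrthogonalProjection] [L.HasOrthogonalProjection]

theorem inner_starProjection_add_apply_self (x : E) :
    ⟪(K.starProjection + L.starProjection) x, x⟫ =
      ‖K.starProjection x‖ ^ 2 + ‖L.starProjection x‖ ^ 2 := by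
  have hK := K.re_inner_starProjection_eq_normSq x
  have hL := L.re_inner_starProjection_eq_normSq x
  simp only [RCLike.re_to_real] at hK hL
  rw [add_apply, inner_add_left, hK, hL]
  rfl

theorem ker_starProjection_add :
    LinearMap.ker ((K.starProjection + L.starProjection : E →L[ℝ] E) : E →ₗ[ℝ] E) =
      Kᗮ ⊓ Lᗮ := by
  ext x
  have h := inner_starProjection_add_apply_self K L x
  simp only [LinearMap.mem_ker, ContinuousLinearMap.coe_coe, Submodule.mem_inf,
    ← Submodule.starProjection_apply_eq_zero_iff]
  constructor
  · intro hx
    rw [hx, inner_zero_left] at h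
    have hK : ‖K.starProjection x‖ = 0 := by nlinarith [norm_nonneg (K.starProjection x)]
    have hL : ‖L.starProjection x‖ = 0 := by nlinarith [norm_nonneg (L.starProjection x)]
    exact ⟨norm_eq_zero.1 hK, norm_eq_zero.1 hL⟩
  · rintro ⟨hK, hL⟩
    rw [add_apply, hK, hL, add_zero]

end

variable [CompleteSpace E] [CompleteSpace K] [CompleteSpace L]

theorem exists_mul_norm_sq_le_inner_starProjection_add
    (hKL : IsClosed ((K ⊔ L : Submodule ℝ E) : Set E)) :
    ∃ c > 0, ∀ x ∈ K ⊔ L, c * ‖x‖ ^ 2 ≤ ⟪(K.starProjection + L.starProjection) x, x⟫ := by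
  obtain ⟨C, hC, hdec⟩ := K.exists_add_eq_norm_le_of_isClosed_sup L hKL
  refine ⟨1 / (2 * C ^ 2), by positivity, fun x hx => ?_⟩
  obtain ⟨a, ha, b, hb, hab, hna, hnb⟩ := hdec x hx
  rw [inner_starProjection_add_apply_self]
  set p := ‖K.starProjection x‖
  set q := ‖L.starProjection x‖
  have hsq : ‖x‖ ^ 2 ≤ C * ‖x‖ * (p + q) :=
    calc ‖x‖ ^ 2 = ⟪x, a⟫ + ⟪x, b⟫ := by
          rw [← inner_add_right, hab, real_inner_self_eq_norm_sq]
      _ = ⟪K.starProjection x, a⟫ + ⟪L.starProjection x, b⟫ := by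
        rw [K.inner_starProjection_left_eq_right, L.inner_starProjection_left_eq_right,
          K.starProjection_eq_self_iff.2 ha, L.starProjection_eq_self_iff.2 hb]
      _ ≤ p * ‖a‖ + q * ‖b‖ := add_le_add (real_inner_le_norm _ _) (real_inner_le_norm _ _)
      _ ≤ C * ‖x‖ * (p + q) := by
          nlinarith [norm_nonneg (K.starProjection x), norm_nonneg (L.starProjection x)]
  have hle : ‖x‖ ≤ C * (p + q) := by
    rcases (norm_nonneg x).eq_or_lt with h0 | hpos
    · rw [← h0]; positivity
    · nlinarith
  rw [one_div, inv_mul_le_iff₀ (by positivity)]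
  calc ‖x‖ ^ 2 ≤ (C * (p + q)) ^ 2 := pow_le_pow_left₀ (norm_nonneg x) hle 2
    _ ≤ 2 * C ^ 2 * (p ^ 2 + q ^ 2) := by nlinarith [sq_nonneg (p - q)]

theorem range_starProjection_add (hKL : IsClosed ((K ⊔ L : Submodule ℝ E) : Set E)) :
    LinearMap.range ((K.starProjection + L.starProjection : E →L[ℝ] E) : E →ₗ[ℝ] E) =
      K ⊔ L := by
  obtain ⟨c, hc, hcoer⟩ := exists_mul_norm_sq_le_inner_starProjection_add K L hKL
  set T := K.starProjection + L.starProjection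
  set V := K ⊔ L
  have : CompleteSpace V := hKL.completeSpace_coe
  have hTV : ∀ x, T x ∈ V := fun x =>
    add_mem (Submodule.mem_sup_left (K.starProjection_apply_mem x))
      (Submodule.mem_sup_right (L.starProjection_apply_mem x))
  refine le_antisymm (by rintro _ ⟨x, rfl⟩; exact hTV x) fun y hy => ?_
  let B : V →L[ℝ] V →L[ℝ] ℝ := (innerSL ℝ).bilinearComp (T ∘L V.subtypeL) V.subtypeL
  have hB : IsCoercive B := ⟨c, hc, fun u => by
    simpa [B, ← sq, mul_assoc] using hcoer u u.2⟩
  -- Lax–Milgram gives `v ∈ V` with `⟪T v - y, w⟫ = 0` for all `w ∈ V`, and `T v - y ∈ V`.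
  let v := hB.continuousLinearEquivOfBilin.symm ⟨y, hy⟩
  have hperp : T v - y ∈ Vᗮ := by
    rw [Submodule.mem_orthogonal']
    intro w hw
    have := hB.continuousLinearEquivOfBilin_apply v ⟨w, hw⟩
    simp only [v, ContinuousLinearEquiv.apply_symm_apply, Submodule.coe_inner] at this
    rw [inner_sub_left, this]
    simp [B, v]
  refine ⟨v, sub_eq_zero.1 ?_⟩
  simpa using (Submodule.inf_orthogonal_eq_bot V).le ⟨sub_mem (hTV v) hy, hperp⟩

end SumOfProjections

noncomputable def Submodule.quotientEquivOfSupEqTop {R M : Type*} [Ring R] [AddCommGroup M]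
    [Module R M] {K V : Submodule R M} (h : K ⊔ V = ⊤) :
    (M ⧸ V) ≃ₗ[R] K ⧸ V.comap K.subtype :=
  ((V.mkQ ∘ₗ K.subtype).quotKerEquivOfSurjective (by
      rw [← LinearMap.range_eq_top, LinearMap.range_comp, Submodule.range_subtype,
        Submodule.map_mkQ_eq_top, sup_comm, h])).symm.trans
    (Submodule.quotEquivOfEq _ _ (by rw [LinearMap.ker_comp, Submodule.ker_mkQ]))

section ComplexStructure

variable {E : Type*} [NormedAddCommGroup E] [InnerProductSpace ℝ E] {J : E →L[ℝ] E}

noncomputable def complexStructureEquiv (J : E →L[ℝ] E) (hJ2 : J ∘L J = -1) : E ≃L[ℝ] E :=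
  .equivOfInverse' J (-J) (by rw [ContinuousLinearMap.comp_neg, hJ2, neg_neg]; rfl)
    (by rw [ContinuousLinearMap.neg_comp, hJ2, neg_neg]; rfl)

theorem IsLagrangian.orthogonal_eq_map (hJ2 : J ∘L J = -1) {lam : Submodule ℝ E}
    (hlam : IsLagrangian J lam) :
    lamᗮ = lam.map (complexStructureEquiv J hJ2 : E →ₗ[ℝ] E) := by
  rw [Submodule.map_equiv_eq_comap_symm]
  ext x
  have hJJ : J (J x) = -x := by simpa using congr($hJ2 x)
  rw [Submodule.mem_comap, hlam.2, Submodule.mem_orthogonal']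
  simp [complexStructureEquiv, hJJ]

end ComplexStructure

theorem p_lambda_positive_fredholm_general
    (J : H →L[ℝ] H) (hJ2 : J ∘L J = -1)
    (lam mu : Submodule ℝ H) (hlam : IsLagrangian J lam) (hmu : IsLagrangian J mu)
    [CompleteSpace lam] [CompleteSpace mu]
    (hpair : IsFredholmPair lam mu) :
    IsSelfAdjoint (projCLM muᗮ + projCLM lamᗮ) ∧
      (∀ x : H, 0 ≤ ⟪(projCLM muᗮ + projCLM lamᗮ) x, x⟫) ∧
      IsFredholmR (projCLM muᗮ + projCLM lamᗮ) ∧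
      LinearMap.ker ((projCLM muᗮ + projCLM lamᗮ : H →L[ℝ] H) : H →ₗ[ℝ] H) = lam ⊓ mu ∧
      Nonempty ((H ⧸ LinearMap.range ((projCLM muᗮ + projCLM lamᗮ : H →L[ℝ] H) : H →ₗ[ℝ] H)) ≃ₗ[ℝ]
        H ⧸ (lamᗮ ⊔ muᗮ)) ∧
      Nonempty ((H ⧸ (lamᗮ ⊔ muᗮ)) ≃ₗ[ℝ]
        lam ⧸ ((lamᗮ ⊔ muᗮ).comap lam.subtype)) := by
  obtain ⟨hfin, hclosed, hcofin⟩ := hpair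
  let e := complexStructureEquiv J hJ2
  have hsup : (lam ⊔ mu).map (e : H →ₗ[ℝ] H) = lamᗮ ⊔ muᗮ := by
    rw [Submodule.map_sup, ← hlam.orthogonal_eq_map hJ2, ← hmu.orthogonal_eq_map hJ2]
  have hclosed' : IsClosed ((muᗮ ⊔ lamᗮ : Submodule ℝ H) : Set H) := by
    rw [sup_comm, ← hsup, Submodule.map_coe]
    exact e.isClosed_image.2 hclosed
  have hker := ker_starProjection_add muᗮ lamᗮ
  have hrange := range_starProjection_add muᗮ lamᗮ hclosed'
  rw [Submodule.orthogonal_orthogonal, Submodule.orthogonal_orthogonal, inf_comm] at hker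
  rw [sup_comm] at hrange
  have hcofin' : FiniteDimensional ℝ (H ⧸ (lamᗮ ⊔ muᗮ)) :=
    (Submodule.Quotient.equiv _ _ e.toLinearEquiv hsup).finiteDimensional
  simp only [projCLM_eq_starProjection]
  have hfred : IsFredholmR (muᗮ.starProjection + lamᗮ.starProjection) := by
    refine ⟨?_, ?_, ?_⟩
    · rwa [hker]
    · rwa [hrange, sup_comm]
    · rwa [hrange]
  refine ⟨(isSelfAdjoint_starProjection _).add (isSelfAdjoint_starProjection _),
    fun x => ?_, hfred, hker,
    ⟨Submodule.quotEquivOfEq _ _ hrange⟩,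
    ⟨Submodule.quotientEquivOfSupEqTop (top_unique ?_)⟩⟩
  · rw [inner_starProjection_add_apply_self]
    positivity
  · calc ⊤ = lam ⊔ lamᗮ := lam.sup_orthogonal_of_hasOrthogonalProjection.symm
      _ ≤ lam ⊔ (lamᗮ ⊔ muᗮ) := sup_le_sup_left le_sup_left lam

/-- For closed Lagrangian subspaces `λ, μ` forming a Fredholm pair, the operator
`p_λ(μ) = P(μ^⊥) + P(λ^⊥)` is a nonnegative selfadjoint Fredholm operator on `H`, with
`Ker(p_λ(μ)) = λ∩μ` and `Coker(p_λ(μ)) ≅ H/(λ^⊥ + μ^⊥) ≅ λ/(λ ∩ (λ^⊥ + μ^⊥))`. -/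
theorem p_lambda_positive_fredholm
    (J : H →L[ℝ] H) (hJ2 : J ∘L J = -1)
    (hJorth : ∀ x y : H, ⟪J x, J y⟫ = ⟪x, y⟫)
    (lam mu : Submodule ℝ H) (hlam : IsLagrangian J lam) (hmu : IsLagrangian J mu)
    [CompleteSpace lam] [CompleteSpace mu]
    (hpair : IsFredholmPair lam mu) :
    IsSelfAdjoint (projCLM muᗮ + projCLM lamᗮ) ∧
      (∀ x : H, 0 ≤ ⟪(projCLM muᗮ + projCLM lamᗮ) x, x⟫) ∧
      IsFredholmR (projCLM muᗮ + projCLM lamᗮ) ∧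
      LinearMap.ker ((projCLM muᗮ + projCLM lamᗮ : H →L[ℝ] H) : H →ₗ[ℝ] H) = lam ⊓ mu ∧
      Nonempty ((H ⧸ LinearMap.range ((projCLM muᗮ + projCLM lamᗮ : H →L[ℝ] H) : H →ₗ[ℝ] H)) ≃ₗ[ℝ]
        H ⧸ (lamᗮ ⊔ muᗮ)) ∧
      Nonempty ((H ⧸ (lamᗮ ⊔ muᗮ)) ≃ₗ[ℝ]
        lam ⧸ ((lamᗮ ⊔ muᗮ).comap lam.subtype)) :=
  p_lambda_positive_fredholm_general J hJ2 lam mu hlam hmu hpair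
end
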